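/- arXiv:1301.6395 — 2 statements merged into one kernel-verified Lean document; each statement's English description precedes it below -/
import Mathlib

section
/- The dual unit curve v(θ) = u'(θ)/[u(θ),u'(θ)] satisfies [v(θ),v'(θ)] > 0 for all θ; i.e., v is a curve with strictly positive curvature in its parameterization. -/
open Real

/-!
With `c = [u, u']⁻¹` we have `v = c • u'` and `v' = c • u'' + c' • u'`. Since `[u', u'] = 0`,
the term `c' • u'` drops out of the determinant, so `[v, v'] = c ² [u', u''] > 0`.
-/

/-- Determinant of two plane vectors. -/
noncomputable def det2 (w₁ w₂ : ℝ × ℝ) : ℝ := w₁.1 * w₂.2 - w₁.2 * w₂.1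

theorem HasDerivAt.det2 {f g : ℝ → ℝ × ℝ} {f' g' : ℝ × ℝ} {t : ℝ}
    (hf : HasDerivAt f f' t) (hg : HasDerivAt g g' t) :
    HasDerivAt (fun s => det2 (f s) (g s)) (det2 f' (g t) + det2 (f t) g') t := by
  have hf₁ : HasDerivAt (fun s => (f s).1) f'.1 t := hf.fst
  have hf₂ : HasDerivAt (fun s => (f s).2) f'.2 t := hf.snd
  have hg₁ : HasDerivAt (fun s => (g s).1) g'.1 t := hg.fst
  have hg₂ : HasDerivAt (fun s => (g s).2) g'.2 t := hg.snd
  exact ((hf₁.mul hg₂).sub (hf₂.mul hg₁)).congr_deriv (by simp only [_root_.det2]; ring)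

theorem det2_smul_smul_add_smul (a b : ℝ) (w w' : ℝ × ℝ) :
    det2 (a • w) (a • w' + b • w) = a ^ 2 * det2 w w' := by
  simp only [det2, Prod.smul_fst, Prod.smul_snd, Prod.fst_add, Prod.snd_add, smul_eq_mul]
  ring

/-- The dual curve v = u'/[u,u'] satisfies [v,v'] > 0. -/
theorem dual_positive_curvature (u u' u'' v : ℝ → ℝ × ℝ)
    (hu : ∀ θ, HasDerivAt u (u' θ) θ)
    (hu' : ∀ θ, HasDerivAt u' (u'' θ) θ)
    (hdet : ∀ θ, 0 < det2 (u θ) (u' θ))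
    (hcurv : ∀ θ, 0 < det2 (u' θ) (u'' θ))
    (hv : ∀ θ, v θ = (det2 (u θ) (u' θ))⁻¹ • u' θ) :
    ∀ θ, 0 < det2 (v θ) (deriv v θ) := by
  intro θ
  have hp : HasDerivAt (fun s => det2 (u s) (u' s)) _ θ := (hu θ).det2 (hu' θ)
  have hv' : HasDerivAt v _ θ :=
    ((hp.inv (hdet θ).ne').smul (hu' θ)).congr_of_eventuallyEq (.of_forall hv)
  rw [hv'.deriv, hv θ, Pi.inv_apply, det2_smul_smul_add_smul]
  exact mul_pos (pow_pos (inv_pos.2 (hdet θ)) 2) (hcurv θ)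
end

section
/- Area difference grows linearly: the diameter line through γ_c(θ) and γ_c(θ+π) divides the region bounded by the equidistant γ_c = M + cu into two parts of areas A₁(c,θ) and A₂(c,θ), and A₁(c,θ) - A₂(c,θ) = 4c·β(θ), where β(θ) = ½∫_θ^{θ+π} α[u,u'] ds. Concretely, ∫_θ^{θ+π}[γ_c(s)-M(θ), γ_c'(s)]ds - ∫_{θ+π}^{θ+2π}[γ_c(s)-M(θ), γ_c'(s)]ds = 8c·β(θ). -/
open Real

/-!
Under `s ↦ s + π` the midpoint curve `M` is unchanged while `u`, `u'` and `α` change sign, so the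
integrand over the second half-turn is the first one with `c` replaced by `-c`. Their difference is
`2c (det2 (M s - M θ) (u' s) + α s * det2 (u s) (u' s))`. Over `[θ, θ + π]` the first term integrates
to the same value as the second: `det2 (M s - M θ) (u s)` has derivative
`det2 (M s - M θ) (u' s) - α s * det2 (u s) (u' s)` and vanishes at both ends, as `M (θ + π) = M θ`.
-/

theorem Function.Antiperiodic.hasDerivAt_antiperiodic {𝕜 F : Type*} [NontriviallyNormedField 𝕜]
    [NormedAddCommGroup F] [NormedSpace 𝕜 F] {u u' : 𝕜 → F} {p : 𝕜}
    (h : Function.Antiperiodic u p) (hu : ∀ s, HasDerivAt u (u' s) s) :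
    Function.Antiperiodic u' p := fun s =>
  ((hu (s + p)).comp_add_const s p).unique <| by
    rw [show (fun t => u (t + p)) = -u from funext h]
    exact (hu s).neg

@[fun_prop]
theorem Continuous.det2 {X : Type*} [TopologicalSpace X] {f g : X → ℝ × ℝ}
    (hf : Continuous f) (hg : Continuous g) : Continuous fun x => det2 (f x) (g x) :=
  (hf.fst.mul hg.snd).sub (hf.snd.mul hg.fst)

theorem integral_det2_sub_eq_integral_mul_det2 {M u u' : ℝ → ℝ × ℝ} {α : ℝ → ℝ} {a b : ℝ}
    (hu : ∀ s, HasDerivAt u (u' s) s) (hM : ∀ s, HasDerivAt M (α s • u' s) s)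
    (hab : M b = M a) (hα : Continuous α) (hu' : Continuous u') :
    ∫ s in a..b, det2 (M s - M a) (u' s) = ∫ s in a..b, α s * det2 (u s) (u' s) := by
  have hMc : Continuous M := Differentiable.continuous fun s => (hM s).differentiableAt
  have huc : Continuous u := Differentiable.continuous fun s => (hu s).differentiableAt
  have hderiv (s : ℝ) : HasDerivAt (fun t => det2 (M t - M a) (u t))
      (det2 (M s - M a) (u' s) - α s * det2 (u s) (u' s)) s := by
    convert ((hM s).sub_const (M a)).det2 (hu s) using 1
    simp only [det2, Prod.smul_fst, Prod.smul_snd, smul_eq_mul]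
    ring
  rw [← sub_eq_zero, ← intervalIntegral.integral_sub,
    intervalIntegral.integral_eq_sub_of_hasDerivAt fun s _ => hderiv s]
  · simp [hab, det2]
  all_goals exact Continuous.intervalIntegrable (by fun_prop) _ _

theorem det2_sub_det2_antipodal (m m₀ v w : ℝ × ℝ) (a c : ℝ) :
    det2 (m + c • v - m₀) ((a + c) • w) - det2 (m + c • -v - m₀) ((-a + c) • -w)
      = 2 * c * (det2 (m - m₀) w + a * det2 v w) := by
  simp only [det2, Prod.fst_add, Prod.snd_add, Prod.fst_sub, Prod.snd_sub, Prod.smul_fst,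
    Prod.smul_snd, smul_eq_mul, Prod.fst_neg, Prod.snd_neg]
  ring

theorem area_difference_linear_general (u u' M : ℝ → ℝ × ℝ) (α : ℝ → ℝ) (c : ℝ)
    (hu : ∀ θ, HasDerivAt u (u' θ) θ)
    (husym : ∀ θ, u (θ + π) = -u θ)
    (hM : ∀ θ, HasDerivAt M (α θ • u' θ) θ)
    (hMper : ∀ θ, M (θ + π) = M θ)
    (hαsym : ∀ θ, α (θ + π) = -α θ)
    (hcontα : Continuous α)
    (hcontu' : Continuous u') :
    ∀ θ : ℝ,
      (∫ s in θ..(θ + π), det2 (M s + c • u s - M θ) ((α s + c) • u' s))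
        - (∫ s in (θ + π)..(θ + 2 * π),
            det2 (M s + c • u s - M θ) ((α s + c) • u' s))
      = 8 * c * ((1/2 : ℝ) * ∫ s in θ..(θ + π), α s * det2 (u s) (u' s)) := by
  intro θ
  have hu'sym : ∀ s, u' (s + π) = -u' s :=
    Function.Antiperiodic.hasDerivAt_antiperiodic husym hu
  have hMc : Continuous M := Differentiable.continuous fun s => (hM s).differentiableAt
  have huc : Continuous u := Differentiable.continuous fun s => (hu s).differentiableAt
  rw [show θ + 2 * π = θ + π + π by ring, ← intervalIntegral.integral_comp_add_right,
    ← intervalIntegral.integral_sub]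
  · simp only [hMper, husym, hαsym, hu'sym, det2_sub_det2_antipodal]
    rw [intervalIntegral.integral_const_mul, intervalIntegral.integral_add,
      integral_det2_sub_eq_integral_mul_det2 hu hM (hMper θ) hcontα hcontu']
    · ring
    all_goals exact Continuous.intervalIntegrable (by fun_prop) _ _
  all_goals exact Continuous.intervalIntegrable (by fun_prop) _ _

/-- The diameter through γ_c(θ) and γ_c(θ+π) divides the region bounded by the
equidistant γ_c = M + cu into two parts whose area difference is 4cβ(θ):
concretely, the difference of the two sector integrals equals 8cβ(θ). -/
theorem area_difference_linear (u u' M : ℝ → ℝ × ℝ) (α : ℝ → ℝ) (c : ℝ)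
    (hu : ∀ θ, HasDerivAt u (u' θ) θ)
    (husym : ∀ θ, u (θ + π) = -u θ)
    (hM : ∀ θ, HasDerivAt M (α θ • u' θ) θ)
    (hMper : ∀ θ, M (θ + π) = M θ)
    (hαsym : ∀ θ, α (θ + π) = -α θ)
    (hcontα : Continuous α)
    (hcontu : Continuous u)
    (hcontu' : Continuous u') :
    ∀ θ : ℝ,
      (∫ s in θ..(θ + π), det2 (M s + c • u s - M θ) ((α s + c) • u' s))
        - (∫ s in (θ + π)..(θ + 2 * π),
            det2 (M s + c • u s - M θ) ((α s + c) • u' s))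
      = 8 * c * ((1/2 : ℝ) * ∫ s in θ..(θ + π), α s * det2 (u s) (u' s)) :=
  area_difference_linear_general u u' M α c hu husym hM hMper hαsym hcontα hcontu'
end
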